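/- With the matching M on 2^[n+2] defined from I = (u_1, u_2, x_1^{e_1},...,x_n^{e_n}) via the four edge families (T,T∖{1}) with {1,2}∪P_1 ⊆ T; (T,T∖{2}) with {1,2}∪P_2 ⊆ T and P_1 ⊄ T; (T,T∖{1}) with 1∈T, 2∉T, A ⊆ T; (T,T∖{2}) with 1∉T, 2∈T, B ⊆ T, T ≠ [n+2]∖{1}: every edge of M is homogeneous, i.e., m_T = m_{T'} for each (T,T') ∈ M. -/

import Mathlib

open Finset

def v1 {n : ℕ} : Fin 2 ⊕ Fin n := Sum.inl 0
def v2 {n : ℕ} : Fin 2 ⊕ Fin n := Sum.inl 1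

/-- Generators of `I`: index `inl 0 ↦ u₁` (exponents `a`), `inl 1 ↦ u₂` (exponents `b`),
`inr i ↦ x_i^{e_i}`; monomials modeled as exponent vectors. -/
def gen {n : ℕ} (a b e : Fin n → ℕ) : Fin 2 ⊕ Fin n → Fin n → ℕ :=
  Sum.elim (fun t => if t = 0 then a else b) (fun i j => if j = i then e i else 0)

/-- The lcm label `m_T` of a subset of generators (pointwise max of exponent vectors). -/
def mT {n : ℕ} (a b e : Fin n → ℕ) (T : Finset (Fin 2 ⊕ Fin n)) : Fin n → ℕ :=
  fun i => T.sup fun k => gen a b e k i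

def P0 {n : ℕ} (a b : Fin n → ℕ) : Finset (Fin 2 ⊕ Fin n) :=
  (Finset.univ.filter fun i => a i = b i).image Sum.inr

def P1 {n : ℕ} (a b : Fin n → ℕ) : Finset (Fin 2 ⊕ Fin n) :=
  (Finset.univ.filter fun i => b i < a i).image Sum.inr

def P2 {n : ℕ} (a b : Fin n → ℕ) : Finset (Fin 2 ⊕ Fin n) :=
  (Finset.univ.filter fun i => a i < b i).image Sum.inr

def setA {n : ℕ} (a : Fin n → ℕ) : Finset (Fin 2 ⊕ Fin n) :=
  (Finset.univ.filter fun i => 0 < a i).image Sum.inr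

def setB {n : ℕ} (b : Fin n → ℕ) : Finset (Fin 2 ⊕ Fin n) :=
  (Finset.univ.filter fun i => 0 < b i).image Sum.inr

/-- The matching `M` on the Hasse diagram of `2^[n+2]`: `MM a b T T'` means `(T,T')` is an
edge of the matching, given by the four families of the paper. -/
def MM {n : ℕ} (a b : Fin n → ℕ) (T T' : Finset (Fin 2 ⊕ Fin n)) : Prop :=
  (v1 ∈ T ∧ v2 ∈ T ∧ P1 a b ⊆ T ∧ T' = T.erase v1) ∨
  (v1 ∈ T ∧ v2 ∈ T ∧ ¬ P1 a b ⊆ T ∧ P2 a b ⊆ T ∧ T' = T.erase v2) ∨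
  (v1 ∈ T ∧ v2 ∉ T ∧ setA a ⊆ T ∧ T' = T.erase v1) ∨
  (v1 ∉ T ∧ v2 ∈ T ∧ setB b ⊆ T ∧ T ≠ Finset.univ.erase v1 ∧ T' = T.erase v2)

/-- `T` is an `M`-critical vertex: it is incident to no edge of the matching. -/
def critical {n : ℕ} (a b : Fin n → ℕ) (T : Finset (Fin 2 ⊕ Fin n)) : Prop :=
  ∀ T', ¬ MM a b T T' ∧ ¬ MM a b T' T

/-! Removing `u₁` (resp. `u₂`) from `T` leaves `m_T` unchanged as soon as, in every variable
`x_i`, its exponent is dominated by a generator still in `T`: the other `u` when that one's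
exponent is at least as large, and otherwise the pure power `x_i^{e_i}`, which lies in `T` by the
subset condition of the edge family (`P₁`, `P₂`, `A` or `B ⊆ T`) and has `e_i > max (a_i, b_i)`. -/

theorem Finset.sup_eq_sup_erase_of_le {α β : Type*} [SemilatticeSup α] [OrderBot α]
    [DecidableEq β] {s : Finset β} {f : β → α} {a : β} (h : f a ≤ (s.erase a).sup f) :
    s.sup f = (s.erase a).sup f :=
  le_antisymm
    (calc s.sup f ≤ (insert a (s.erase a)).sup f := sup_mono (insert_erase_subset a s)
      _ = (s.erase a).sup f := by rw [sup_insert, sup_eq_right.mpr h])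
    (sup_mono (erase_subset a s))

section Homogeneous

variable {n : ℕ} {a b e : Fin n → ℕ} {T : Finset (Fin 2 ⊕ Fin n)}

@[simp] lemma gen_v1 : gen a b e v1 = a := rfl

@[simp] lemma gen_v2 : gen a b e v2 = b := rfl

@[simp] lemma gen_inr_self (i : Fin n) : gen a b e (Sum.inr i) i = e i := by simp [gen]

lemma v1_ne_v2 : (v1 : Fin 2 ⊕ Fin n) ≠ v2 := by simp [v1, v2]

lemma gen_le_mT {k : Fin 2 ⊕ Fin n} (hk : k ∈ T) (i : Fin n) : gen a b e k i ≤ mT a b e T i :=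
  le_sup (f := fun k => gen a b e k i) hk

lemma le_mT_erase_inl_of_inr_mem {x : ℕ} {i : Fin n} (t : Fin 2) (hx : x < e i)
    (hi : Sum.inr i ∈ T) : x ≤ mT a b e (T.erase (Sum.inl t)) i :=
  calc x ≤ gen a b e (Sum.inr i) i := by rw [gen_inr_self]; exact hx.le
    _ ≤ _ := gen_le_mT (mem_erase.mpr ⟨Sum.inr_ne_inl, hi⟩) i

lemma mT_eq_mT_erase {v : Fin 2 ⊕ Fin n} (h : ∀ i, gen a b e v i ≤ mT a b e (T.erase v) i) :
    mT a b e T = mT a b e (T.erase v) :=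
  funext fun i => sup_eq_sup_erase_of_le (h i)

lemma mT_erase_v1_of_P1_subset (ha : ∀ i, a i < e i) (h2 : v2 ∈ T) (hP : P1 a b ⊆ T) :
    mT a b e T = mT a b e (T.erase v1) := by
  refine mT_eq_mT_erase fun i => ?_
  rw [gen_v1]
  rcases le_or_gt (a i) (b i) with hle | hlt
  · exact hle.trans (gen_le_mT (mem_erase.mpr ⟨v1_ne_v2.symm, h2⟩) i)
  · exact le_mT_erase_inl_of_inr_mem 0 (ha i) (hP (by simp [P1, hlt]))

lemma mT_erase_v2_of_P2_subset (hb : ∀ i, b i < e i) (h1 : v1 ∈ T) (hP : P2 a b ⊆ T) :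
    mT a b e T = mT a b e (T.erase v2) := by
  refine mT_eq_mT_erase fun i => ?_
  rw [gen_v2]
  rcases le_or_gt (b i) (a i) with hle | hlt
  · exact hle.trans (gen_le_mT (mem_erase.mpr ⟨v1_ne_v2, h1⟩) i)
  · exact le_mT_erase_inl_of_inr_mem 1 (hb i) (hP (by simp [P2, hlt]))

lemma mT_erase_v1_of_setA_subset (ha : ∀ i, a i < e i) (hA : setA a ⊆ T) :
    mT a b e T = mT a b e (T.erase v1) := by
  refine mT_eq_mT_erase fun i => ?_
  rw [gen_v1]
  rcases Nat.eq_zero_or_pos (a i) with h0 | hpos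
  · exact h0.trans_le (Nat.zero_le _)
  · exact le_mT_erase_inl_of_inr_mem 0 (ha i) (hA (by simp [setA, hpos]))

lemma mT_erase_v2_of_setB_subset (hb : ∀ i, b i < e i) (hB : setB b ⊆ T) :
    mT a b e T = mT a b e (T.erase v2) := by
  refine mT_eq_mT_erase fun i => ?_
  rw [gen_v2]
  rcases Nat.eq_zero_or_pos (b i) with h0 | hpos
  · exact h0.trans_le (Nat.zero_le _)
  · exact le_mT_erase_inl_of_inr_mem 1 (hb i) (hB (by simp [setB, hpos]))

end Homogeneous

theorem stmt8_general (n : ℕ) (a b e : Fin n → ℕ)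
    (he : ∀ i, max (a i) (b i) < e i)
    (T T' : Finset (Fin 2 ⊕ Fin n)) (h : MM a b T T') :
    mT a b e T = mT a b e T' := by
  have ha : ∀ i, a i < e i := fun i => (le_max_left _ _).trans_lt (he i)
  have hb : ∀ i, b i < e i := fun i => (le_max_right _ _).trans_lt (he i)
  rcases h with ⟨-, h2, hP, rfl⟩ | ⟨h1, -, -, hP, rfl⟩ | ⟨-, -, hA, rfl⟩ | ⟨-, -, hB, -, rfl⟩
  · exact mT_erase_v1_of_P1_subset ha h2 hP
  · exact mT_erase_v2_of_P2_subset hb h1 hP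
  · exact mT_erase_v1_of_setA_subset ha hA
  · exact mT_erase_v2_of_setB_subset hb hB

/-- every edge of the matching `M` is homogeneous: `m_T = m_{T'}`. -/
theorem stmt8 (n : ℕ) (a b e : Fin n → ℕ) (hab : ∀ i, 0 < a i + b i)
    (he : ∀ i, max (a i) (b i) < e i)
    (T T' : Finset (Fin 2 ⊕ Fin n)) (h : MM a b T T') :
    mT a b e T = mT a b e T' :=
  stmt8_general n a b e he T T' h
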